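/- arXiv:1602.00733 — 2 statements merged into one kernel-verified Lean document; each statement's English description precedes it below -/
import Mathlib

section
/- For all integers p, q with 3 ≤ p < q, there is no contraction model of the complement of the cycle C_p in the complement of the cycle C_q. In particular, the family {complement of C_i : i ≥ 6} is an infinite antichain of the contraction relation. -/
open SimpleGraph

/-- A contraction model of a graph `H` in a graph `G`: a map sending each vertex of `H`
to a connected subset of vertices of `G`, these subsets partitioning the vertices of `G`,
with distinct vertices of `H` adjacent iff the corresponding subsets are joined by an
edge of `G`. -/
def IsContractionModel {V W : Type*} (G : SimpleGraph V) (H : SimpleGraph W)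
    (φ : W → Set V) : Prop :=
  (∀ w : W, (G.induce (φ w)).Connected) ∧
  (∀ v : V, ∃! w : W, v ∈ φ w) ∧
  ∀ w w' : W, w ≠ w' →
    (H.Adj w w' ↔ ∃ a ∈ φ w, ∃ b ∈ φ w', G.Adj a b)

/-- `H` is a contraction of `G`: there is a contraction model of `H` in `G`
(equivalently, `H` can be obtained from `G` by a sequence of edge contractions). -/
def IsContraction {V W : Type*} (H : SimpleGraph W) (G : SimpleGraph V) : Prop :=
  ∃ φ : W → Set V, IsContractionModel G H φ

/-- The graph `D_r`: two adjacent vertices together with `r` further vertices,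
each adjacent to exactly the first two. `D_2` is the diamond (`K₄` minus an edge). -/
def Dgraph (r : ℕ) : SimpleGraph (Fin 2 ⊕ Fin r) :=
  SimpleGraph.fromRel (fun x _ => x.isLeft)

/-- Finite graphs, with vertex set `Fin n` for some `n`. -/
def FinGraph : Type := Σ n : ℕ, SimpleGraph (Fin n)

/-- The contraction relation on finite graphs. -/
def FinGraph.Contr (H G : FinGraph) : Prop := IsContraction H.2 G.2

/-- A set of finite graphs is well-quasi-ordered by the contraction relation if every
infinite sequence of its members contains two graphs, the earlier being a contraction
of the later. -/
def WqoByContraction (S : Set FinGraph) : Prop :=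
  ∀ f : ℕ → FinGraph, (∀ k, f k ∈ S) → ∃ i j : ℕ, i < j ∧ FinGraph.Contr (f i) (f j)

/-!
In a contraction model of `Hᶜ` in `Gᶜ`, two bags of adjacent vertices of `H` send no edge of
`Gᶜ` to each other, so they are completely joined in `G`. If `G` has maximum degree at most `2`
and `H` minimum degree at least `2`, pick for a bag `φ w` a neighbour `u` of `w` and a second
neighbour `w'` of `u`: the disjoint nonempty bags `φ w`, `φ w'` both lie in the neighbourhood of
a vertex of `φ u`, which has at most two elements, so `φ w` is a singleton. Hence all bags are
singletons and `G` has at most as many vertices as `H`; for antiholes this forces `q ≤ p`, while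
`p ≤ q` holds for any contraction since bags are nonempty and disjoint.
-/

namespace IsContractionModel

variable {V W : Type*} {G : SimpleGraph V} {H : SimpleGraph W} {φ : W → Set V}

theorem nonempty (h : IsContractionModel G H φ) (w : W) : (φ w).Nonempty :=
  Set.nonempty_coe_sort.mp (h.1 w).nonempty

theorem disjoint (h : IsContractionModel G H φ) {w w' : W} (hne : w ≠ w') :
    Disjoint (φ w) (φ w') :=
  Set.disjoint_left.mpr fun _ ha hb => hne ((h.2.1 _).unique ha hb)

theorem card_le [Finite V] (h : IsContractionModel G H φ) : Nat.card W ≤ Nat.card V := by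
  choose rep hrep using h.nonempty
  refine Nat.card_le_card_of_injective rep fun w w' hww' => ?_
  by_contra hne
  exact Set.disjoint_left.mp (h.disjoint hne) (hrep w) (hww' ▸ hrep w')

theorem card_le_of_subsingleton [Finite W] (h : IsContractionModel G H φ)
    (hφ : ∀ w, (φ w).Subsingleton) : Nat.card V ≤ Nat.card W := by
  choose bag hbag using fun v => (h.2.1 v).exists
  exact Nat.card_le_card_of_injective bag fun v v' hvv' =>
    hφ (bag v) (hbag v) (hvv' ▸ hbag v')

theorem adj_of_adj_compl (h : IsContractionModel Gᶜ Hᶜ φ) {w w' : W} (hww' : H.Adj w w')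
    {a b : V} (ha : a ∈ φ w) (hb : b ∈ φ w') : G.Adj a b := by
  have hab : a ≠ b := fun hab => Set.disjoint_left.mp (h.disjoint hww'.ne) ha (hab ▸ hb)
  by_contra hnadj
  have hcompl : Gᶜ.Adj a b := (compl_adj G a b).mpr ⟨hab, hnadj⟩
  exact ((compl_adj H w w').mp ((h.2.2 w w' hww'.ne).mpr ⟨a, ha, b, hb, hcompl⟩)).2 hww'

theorem subsingleton_of_adj_compl (h : IsContractionModel Gᶜ Hᶜ φ) {u w w' : W}
    (hw : H.Adj u w) (hw' : H.Adj u w') (hne : w ≠ w') {a : V} (ha : a ∈ φ u)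
    (hdeg : (G.neighborSet a).encard ≤ 2) : (φ w).Subsingleton := by
  have hsub : φ w ∪ φ w' ⊆ G.neighborSet a := Set.union_subset
    (fun _ hb => h.adj_of_adj_compl hw ha hb) (fun _ hb => h.adj_of_adj_compl hw' ha hb)
  have hsum : (φ w).encard + 1 ≤ 2 := calc
    (φ w).encard + 1 ≤ (φ w).encard + (φ w').encard := by
      gcongr; exact Set.one_le_encard_iff_nonempty.mpr (h.nonempty w')
    _ = (φ w ∪ φ w').encard := (Set.encard_union_eq (h.disjoint hne)).symm
    _ ≤ 2 := (Set.encard_mono hsub).trans hdeg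
  rw [← Set.encard_le_one_iff_subsingleton]
  exact (ENat.add_le_add_iff_right ENat.one_ne_top).mp (by rwa [one_add_one_eq_two])

theorem card_le_of_compl [Finite W] [G.LocallyFinite] [H.LocallyFinite]
    (h : IsContractionModel Gᶜ Hᶜ φ) (hG : ∀ a, G.degree a ≤ 2) (hH : ∀ u, 2 ≤ H.degree u) :
    Nat.card V ≤ Nat.card W := by
  refine h.card_le_of_subsingleton fun w => ?_
  obtain ⟨u, hu⟩ := (H.degree_pos_iff_exists_adj w).mp (two_pos.trans_le (hH w))
  obtain ⟨w', hw', hne⟩ := Finset.exists_mem_ne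
    ((H.card_neighborFinset_eq_degree u).symm ▸ hH u) w
  obtain ⟨a, ha⟩ := h.nonempty u
  refine h.subsingleton_of_adj_compl hu.symm ((H.mem_neighborFinset u w').mp hw') hne.symm ha ?_
  rw [← G.coe_neighborFinset, Set.encard_coe_eq_coe_finsetCard, G.card_neighborFinset_eq_degree]
  exact_mod_cast hG a

theorem le_of_cycleGraph_compl {p q : ℕ} {φ : Fin p → Set (Fin q)}
    (h : IsContractionModel (cycleGraph q)ᶜ (cycleGraph p)ᶜ φ) (hp : 3 ≤ p) : q ≤ p := by
  have hpq : p ≤ q := by simpa using h.card_le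
  obtain ⟨m, rfl⟩ : ∃ m, p = m + 3 := ⟨p - 3, by omega⟩
  obtain ⟨n, rfl⟩ : ∃ n, q = n + 3 := ⟨q - 3, by omega⟩
  simpa using h.card_le_of_compl (fun _ => cycleGraph_degree_three_le.le)
    (fun _ => cycleGraph_degree_three_le.ge)

end IsContractionModel

/-- For all integers `3 ≤ p < q`, there is no contraction model of the
complement of the cycle `C_p` in the complement of the cycle `C_q`. In particular, the
family of complements of cycles `C_i` with `i ≥ 6` is an infinite antichain of the
contraction relation. -/
theorem antiholes_antichain :
    (∀ p q : ℕ, 3 ≤ p → p < q →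
      ∀ φ : Fin p → Set (Fin q),
        ¬ IsContractionModel (SimpleGraph.cycleGraph q)ᶜ (SimpleGraph.cycleGraph p)ᶜ φ) ∧
    (∀ i j : ℕ, 6 ≤ i → 6 ≤ j → i ≠ j →
      ¬ IsContraction (SimpleGraph.cycleGraph i)ᶜ (SimpleGraph.cycleGraph j)ᶜ) := by
  refine ⟨fun p q hp hpq φ hφ => (hφ.le_of_cycleGraph_compl hp).not_gt hpq,
    fun i j hi _ hij ⟨φ, hφ⟩ => hij ?_⟩
  exact le_antisymm (by simpa using hφ.card_le) (hφ.le_of_cycleGraph_compl (by omega))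
end

section
/- Let ⟨H_1, …, H_p⟩ and ⟨G_1, …, G_q⟩ be sequences of rooted connected graphs with p ≥ 1, and suppose there is a strictly increasing function φ : {1,…,p} → {1,…,q} such that for every i, H_i is a rooted contraction of G_{φ(i)}. Then: (i) cycle(H_1,…,H_p) is a rooted contraction of cycle(G_1,…,G_q); (ii) clique(H_1,…,H_p) is a rooted contraction of clique(G_1,…,G_q); and (iii) stick(H_1,…,H_p) is a rooted contraction of stick(G_1,…,G_q). -/
open SimpleGraph

/-- A rooted graph: a finite graph with a distinguished vertex, its root. -/
structure RootedGraph where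
  V : Type
  [finV : Finite V]
  graph : SimpleGraph V
  root : V

attribute [instance] RootedGraph.finV

/-- `H` is a rooted contraction of `G`: there is a contraction model of `H` in `G` in
which the branch set of the root of `H` contains the root of `G`. -/
def RootedContraction (H G : RootedGraph) : Prop :=
  ∃ φ : H.V → Set G.V, IsContractionModel G.graph H.graph φ ∧ G.root ∈ φ H.root

/-- Relation describing the edges of the disjoint union of the rooted graphs
`Gs 0, …, Gs m`. -/
def sigmaAdjRel {m : ℕ} (Gs : Fin (m + 1) → RootedGraph)
    (x y : Σ i : Fin (m + 1), (Gs i).V) : Prop :=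
  ∃ (i : Fin (m + 1)) (a b : (Gs i).V),
    (Gs i).graph.Adj a b ∧ x = ⟨i, a⟩ ∧ y = ⟨i, b⟩

/-- `cycleC (G_0, …, G_m)`: the disjoint union of the `G_i`'s together with the edges
`{root G_i, root G_{i+1 mod m+1}}`; its root is the root of `G_0`. -/
def cycleC {m : ℕ} (Gs : Fin (m + 1) → RootedGraph) : RootedGraph where
  V := Σ i : Fin (m + 1), (Gs i).V
  graph := SimpleGraph.fromRel (fun x y => sigmaAdjRel Gs x y ∨
    ∃ i : Fin (m + 1), x = ⟨i, (Gs i).root⟩ ∧ y = ⟨i + 1, (Gs (i + 1)).root⟩)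
  root := ⟨0, (Gs 0).root⟩

/-- `cliqueC (G_0, …, G_m)`: the disjoint union of the `G_i`'s together with all edges
`{root G_i, root G_j}` for `i ≠ j`; its root is the root of `G_0`. -/
def cliqueC {m : ℕ} (Gs : Fin (m + 1) → RootedGraph) : RootedGraph where
  V := Σ i : Fin (m + 1), (Gs i).V
  graph := SimpleGraph.fromRel (fun x y => sigmaAdjRel Gs x y ∨
    ∃ i j : Fin (m + 1), i ≠ j ∧ x = ⟨i, (Gs i).root⟩ ∧ y = ⟨j, (Gs j).root⟩)
  root := ⟨0, (Gs 0).root⟩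

/-- `stickC (G_0, …, G_m)`: the disjoint union of the `G_i`'s with all the roots
identified into a single vertex (represented by `none`), which is the new root. -/
def stickC {m : ℕ} (Gs : Fin (m + 1) → RootedGraph) : RootedGraph :=
  haveI : ∀ i : Fin (m + 1), Finite {v : (Gs i).V // v ≠ (Gs i).root} :=
    fun _ => Subtype.finite
  haveI : Finite (Option (Σ i : Fin (m + 1), {v : (Gs i).V // v ≠ (Gs i).root})) := by
    cases nonempty_fintype (Σ i : Fin (m + 1), {v : (Gs i).V // v ≠ (Gs i).root})
    infer_instance
  { V := Option (Σ i : Fin (m + 1), {v : (Gs i).V // v ≠ (Gs i).root})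
    graph := SimpleGraph.fromRel (fun x y =>
    (∃ (i : Fin (m + 1)) (a b : {v : (Gs i).V // v ≠ (Gs i).root}),
      (Gs i).graph.Adj a.1 b.1 ∧ x = some ⟨i, a⟩ ∧ y = some ⟨i, b⟩) ∨
    (∃ (i : Fin (m + 1)) (b : {v : (Gs i).V // v ≠ (Gs i).root}),
      (Gs i).graph.Adj (Gs i).root b.1 ∧ x = none ∧ y = some ⟨i, b⟩))
    root := none }

/-!
Each composition is the disjoint union of its parts with the roots joined along a graph on the
index set: a cycle for `cycleC`, a complete graph for `cliqueC`; `stickC` is the quotient of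
`cliqueC` by its clique of roots. Let `ψ j` be the largest `i` with `φ i ≤ j`. Its fibres are
consecutive blocks, so they contract the index cycle (or complete graph) on `Fin (q + 1)` onto
the one on `Fin (p + 1)`. A vertex of `H i` keeps its branch set in `G (φ i)`, except that the
root also absorbs every `G j` with `j ≠ φ i` in block `i`; this set is connected because each
`G j` is connected and the roots of a block are linked by the index graph. Contraction models
compose and descend to quotients, which gives the stick case from the clique case.
-/

namespace SimpleGraph

variable {V V' ι : Type*} {G : SimpleGraph V} {G' : SimpleGraph V'}

lemma Connected.induce_range {f : V → V'}
    (hf : ∀ ⦃x y⦄, G.Adj x y → f x = f y ∨ G'.Adj (f x) (f y)) (hG : G.Connected) :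
    (G'.induce (Set.range f)).Connected := by
  have : Nonempty V := hG.nonempty
  rw [connected_iff_exists_forall_reachable]
  refine ⟨⟨f (Classical.arbitrary V), Set.mem_range_self _⟩, ?_⟩
  rintro ⟨_, x, rfl⟩
  rw [reachable_iff_reflTransGen]
  refine ((reachable_iff_reflTransGen _ _).mp (hG.preconnected _ x)).lift'
    (fun v => (⟨f v, Set.mem_range_self v⟩ : Set.range f)) fun v w hvw => ?_
  rcases hf hvw with h | h
  · simp only [Function.onFun, h]; exact .refl
  · exact .single h

lemma Connected.induce_image {f : V → V'} {s : Set V}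
    (hf : ∀ ⦃x y⦄, G.Adj x y → f x = f y ∨ G'.Adj (f x) (f y)) (hs : (G.induce s).Connected) :
    (G'.induce (f '' s)).Connected := by
  have := hs.induce_range (f := f ∘ Subtype.val) fun x y h => hf h
  rwa [Set.range_comp, Subtype.range_coe] at this

lemma Reachable.induce_mono {s t : Set V} (hst : s ⊆ t) {x y : V} {hx : x ∈ s} {hy : y ∈ s}
    (h : (G.induce s).Reachable ⟨x, hx⟩ ⟨y, hy⟩) :
    (G.induce t).Reachable ⟨x, hst hx⟩ ⟨y, hst hy⟩ :=
  h.map (induceHomOfLE G hst).toHom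

lemma induce_biUnion_connected {K : SimpleGraph ι} {s : Set ι} {t : ι → Set V}
    (hs : (K.induce s).Connected) (ht : ∀ i ∈ s, (G.induce (t i)).Connected)
    (hadj : ∀ i ∈ s, ∀ j ∈ s, K.Adj i j → ∃ x ∈ t i, ∃ y ∈ t j, G.Adj x y) :
    (G.induce (⋃ i ∈ s, t i)).Connected := by
  have hsub : ∀ i ∈ s, t i ⊆ ⋃ i ∈ s, t i := fun i hi => Set.subset_biUnion_of_mem hi
  obtain ⟨i₀, hi₀⟩ := hs.nonempty
  obtain ⟨u, hu⟩ := (ht i₀ hi₀).nonempty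
  rw [connected_iff_exists_forall_reachable]
  refine ⟨⟨u, hsub i₀ hi₀ hu⟩, ?_⟩
  suffices key : ∀ j : s, ∀ x (hx : x ∈ t j),
      (G.induce _).Reachable ⟨u, hsub i₀ hi₀ hu⟩ ⟨x, hsub j j.2 hx⟩ by
    rintro ⟨x, hx⟩
    obtain ⟨j, hj, hxj⟩ := Set.mem_iUnion₂.mp hx
    exact key ⟨j, hj⟩ x hxj
  intro j
  induction (reachable_iff_reflTransGen _ _).mp (hs.preconnected ⟨i₀, hi₀⟩ j) with
  | refl =>
    exact fun x hx => ((ht i₀ hi₀).preconnected ⟨u, hu⟩ ⟨x, hx⟩).induce_mono (hsub i₀ hi₀)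
  | @tail j k _ hjk ih =>
    obtain ⟨x, hx, y, hy, hxy⟩ := hadj j j.2 k k.2 hjk
    intro z hz
    have hxy' : (G.induce _).Adj ⟨x, hsub j j.2 hx⟩ ⟨y, hsub k k.2 hy⟩ := hxy
    refine ((ih x hx).trans hxy'.reachable).trans ?_
    exact ((ht k k.2).preconnected ⟨y, hy⟩ ⟨z, hz⟩).induce_mono (hsub k k.2)

lemma fromRel_or_congr {r s t : V → V → Prop}
    (h : ∀ x y, x ≠ y → (s x y ∨ s y x ↔ t x y ∨ t y x)) :
    fromRel (fun x y => r x y ∨ s x y) =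
      fromRel (fun x y => r x y ∨ t x y) := by
  ext x y
  simp only [fromRel_adj]
  refine and_congr_right fun hne => ?_
  rw [or_or_or_comm, h x y hne, or_or_or_comm]

lemma cycleGraph_adj_iff_eq_add_one {n : ℕ} {u v : Fin (n + 1)} :
    (cycleGraph (n + 1)).Adj u v ↔ u ≠ v ∧ (v = u + 1 ∨ u = v + 1) := by
  rcases n with _ | n
  · exact iff_of_false cycleGraph_one_adj fun h => h.1 (Subsingleton.elim (α := Fin 1) u v)
  · rw [cycleGraph_adj, sub_eq_iff_eq_add, sub_eq_iff_eq_add, add_comm 1, add_comm 1, or_comm]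
    refine ⟨fun h => ⟨?_, h⟩, And.right⟩
    rintro rfl
    simp at h

lemma cycleGraph_adj_castSucc_succ {n : ℕ} (k : Fin n) :
    (cycleGraph (n + 1)).Adj k.castSucc k.succ :=
  cycleGraph_adj_iff_eq_add_one.mpr ⟨Fin.castSucc_lt_succ.ne, .inl Fin.coeSucc_eq_succ.symm⟩

lemma preconnected_induce_cycleGraph_of_ordConnected {n : ℕ} {s : Set (Fin (n + 1))}
    (hs : s.OrdConnected) : ((cycleGraph (n + 1)).induce s).Preconnected := by
  suffices key : ∀ x (hx : x ∈ s) y (hy : y ∈ s), x ≤ y →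
      ((cycleGraph (n + 1)).induce s).Reachable ⟨x, hx⟩ ⟨y, hy⟩ by
    rintro ⟨x, hx⟩ ⟨y, hy⟩
    rcases le_total x y with hxy | hyx
    exacts [key x hx y hy hxy, (key y hy x hx hyx).symm]
  intro x hx y
  induction y using Fin.induction with
  | zero =>
    intro hy hxy
    obtain rfl := Fin.le_zero_iff.mp hxy
    rfl
  | succ k ih =>
    intro hy hxy
    rcases hxy.eq_or_lt with rfl | hlt
    · rfl
    have hxk : x ≤ k.castSucc := Fin.le_castSucc_iff.mpr hlt
    have hk : k.castSucc ∈ s := hs.out hx hy ⟨hxk, (Fin.castSucc_le_succ k)⟩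
    have hadj : ((cycleGraph (n + 1)).induce s).Adj ⟨_, hk⟩ ⟨_, hy⟩ :=
      cycleGraph_adj_castSucc_succ k
    exact (ih hk hxk).trans hadj.reachable

end SimpleGraph

namespace IsContractionModel

variable {U V V' W X : Type*} {G : SimpleGraph V} {G' : SimpleGraph V'} {H : SimpleGraph W}
  {K : SimpleGraph X} {μ : W → Set V}

lemma eq_of_mem (hμ : IsContractionModel G H μ) {x : V} {w w' : W} (hw : x ∈ μ w)
    (hw' : x ∈ μ w') : w = w' :=
  (hμ.2.1 x).unique hw hw'

lemma comp {β : X → Set W} (hμ : IsContractionModel G H μ) (hβ : IsContractionModel H K β) :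
    IsContractionModel G K fun u => ⋃ w ∈ β u, μ w := by
  refine ⟨fun u => ?_, fun x => ?_, fun u u' huu' => ?_⟩
  · exact induce_biUnion_connected (hβ.1 u) (fun w _ => hμ.1 w)
      fun w _ w' _ h => (hμ.2.2 w w' h.ne).mp h
  · obtain ⟨w, hw, -⟩ := hμ.2.1 x
    obtain ⟨u, hu, -⟩ := hβ.2.1 w
    refine ⟨u, Set.mem_biUnion hu hw, fun u' hu' => ?_⟩
    obtain ⟨w', hw', hxw'⟩ := Set.mem_iUnion₂.mp hu'
    exact hβ.eq_of_mem (hμ.eq_of_mem hxw' hw ▸ hw') hu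
  · simp only [hβ.2.2 u u' huu', Set.mem_iUnion₂, exists_prop]
    constructor
    · rintro ⟨w, hw, w', hw', hww'⟩
      obtain ⟨x, hx, y, hy, hxy⟩ := (hμ.2.2 w w' hww'.ne).mp hww'
      exact ⟨x, ⟨w, hw, hx⟩, y, ⟨w', hw', hy⟩, hxy⟩
    · rintro ⟨x, ⟨w, hw, hx⟩, y, ⟨w', hw', hy⟩, hxy⟩
      have hww' : w ≠ w' := by
        rintro rfl
        exact huu' (hβ.eq_of_mem hw hw')
      exact ⟨w, hw, w', hw', (hμ.2.2 w w' hww').mpr ⟨x, hx, y, hy, hxy⟩⟩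

lemma image {f : V → V'} (hμ : IsContractionModel G H μ)
    (hf : IsContractionModel G G' fun v => f ⁻¹' {v})
    (hsat : ∀ w x y, f x = f y → x ∈ μ w → y ∈ μ w) :
    IsContractionModel G' H fun w => f '' μ w := by
  have hf_adj : ∀ ⦃x y⦄, f x ≠ f y → G.Adj x y → G'.Adj (f x) (f y) := fun x y hne hxy =>
    (hf.2.2 _ _ hne).mpr ⟨x, rfl, y, rfl, hxy⟩
  refine ⟨fun w => ?_, fun v => ?_, fun w w' hww' => ?_⟩
  · refine (hμ.1 w).induce_image fun x y hxy => ?_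
    by_cases h : f x = f y
    exacts [.inl h, .inr (hf_adj h hxy)]
  · obtain ⟨⟨x, rfl⟩⟩ := (hf.1 v).nonempty
    obtain ⟨w, hw, -⟩ := hμ.2.1 x
    refine ⟨w, Set.mem_image_of_mem f hw, ?_⟩
    rintro w' ⟨y, hy, hyx⟩
    exact hμ.eq_of_mem (hsat w' y x hyx hy) hw
  · rw [hμ.2.2 w w' hww']
    constructor
    · rintro ⟨x, hx, y, hy, hxy⟩
      have hne : f x ≠ f y := fun h => hww' (hμ.eq_of_mem hx (hsat w' y x h.symm hy))
      exact ⟨f x, Set.mem_image_of_mem f hx, f y, Set.mem_image_of_mem f hy, hf_adj hne hxy⟩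
    · rintro ⟨_, ⟨x, hx, rfl⟩, _, ⟨y, hy, rfl⟩, hxy⟩
      obtain ⟨a, ha, b, hb, hab⟩ := (hf.2.2 _ _ hxy.ne).mp hxy
      exact ⟨a, hsat w x a ha.symm hx, b, hsat w' y b hb.symm hy, hab⟩

end IsContractionModel

lemma Monotone.map_bot_of_surjective {α β : Type*} [Preorder α] [OrderBot α] [PartialOrder β]
    [OrderBot β] {f : α → β} (hf : Monotone f) (hsurj : Function.Surjective f) : f ⊥ = ⊥ := by
  obtain ⟨a, ha⟩ := hsurj ⊥
  exact le_bot_iff.mp (ha ▸ hf bot_le)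

lemma Monotone.map_top_of_surjective {α β : Type*} [Preorder α] [OrderTop α] [PartialOrder β]
    [OrderTop β] {f : α → β} (hf : Monotone f) (hsurj : Function.Surjective f) : f ⊤ = ⊤ :=
  hf.dual.map_bot_of_surjective hsurj

lemma StrictMono.exists_monotone_leftInverse {α β : Type*} [Fintype α] [LinearOrder α]
    [OrderBot α] [Preorder β] {φ : α → β} (hφ : StrictMono φ) :
    ∃ ψ : β → α, Monotone ψ ∧ Function.LeftInverse ψ φ := by
  classical
  refine ⟨fun b => (Finset.univ.filter fun a => φ a ≤ b).sup id, fun b b' hbb' => ?_, fun a => ?_⟩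
  · exact Finset.sup_mono fun a ha => by
      simp only [Finset.mem_filter, Finset.mem_univ, true_and] at ha ⊢
      exact ha.trans hbb'
  · refine le_antisymm (Finset.sup_le fun a' ha' => ?_) (Finset.le_sup (f := id) (by simp))
    simp only [Finset.mem_filter, Finset.mem_univ, true_and] at ha'
    exact hφ.le_iff_le.mp ha'

namespace Fin

variable {p q : ℕ} {ψ : Fin (q + 1) → Fin (p + 1)}

lemma val_map_succ_le_of_monotone_of_surjective (hmono : Monotone ψ)
    (hsurj : Function.Surjective ψ) (k : Fin q) :
    (ψ k.succ : ℕ) ≤ ψ k.castSucc + 1 := by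
  by_contra! h
  obtain ⟨j, hj⟩ := hsurj ⟨ψ k.castSucc + 1, by omega⟩
  rcases le_or_gt j k.castSucc with hjk | hjk
  · have := le_def.mp (hmono hjk)
    rw [hj] at this
    simp at this
  · have := le_def.mp (hmono (Fin.castSucc_lt_iff_succ_le.mp hjk))
    rw [hj] at this
    simp only at this
    omega

lemma eq_add_one_iff_exists_of_monotone_of_surjective (hmono : Monotone ψ)
    (hsurj : Function.Surjective ψ) {i i' : Fin (p + 1)} (hii' : i ≠ i') :
    i' = i + 1 ↔ ∃ j, ψ j = i ∧ ψ (j + 1) = i' := by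
  have h0 : ψ 0 = 0 := hmono.map_bot_of_surjective hsurj
  have hlast : ψ (last q) = last p := by
    simpa only [top_eq_last] using hmono.map_top_of_surjective hsurj
  have hstep := val_map_succ_le_of_monotone_of_surjective hmono hsurj
  constructor
  · rintro rfl
    rcases eq_or_ne i (last p) with rfl | hi
    · exact ⟨last q, hlast, by rw [last_add_one, h0, last_add_one]⟩
    have hval : ((i + 1 : Fin (p + 1)) : ℕ) = i + 1 :=
      val_add_one_of_lt (lt_of_le_of_ne (le_last i) hi)
    by_contra! hnone
    -- no step of `ψ` enters `i + 1`, so `ψ` never exceeds `i`, contradicting surjectivity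
    have hle : ∀ j, ψ j ≤ i := by
      intro j
      induction j using Fin.induction with
      | zero => rw [h0]; exact zero_le i
      | succ k ih =>
        have := hstep k
        rw [le_def] at ih ⊢
        by_contra! hk
        refine hnone k.castSucc (Fin.ext (by omega)) ?_
        rw [coeSucc_eq_succ]
        exact Fin.ext (by omega)
    obtain ⟨j, hj⟩ := hsurj (i + 1)
    have := le_def.mp (hle j)
    rw [hj] at this
    omega
  · rintro ⟨j, rfl, rfl⟩
    rcases eq_castSucc_or_eq_last j with ⟨k, rfl⟩ | rfl
    · rw [coeSucc_eq_succ] at hii' ⊢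
      have hlt : ψ k.castSucc < ψ k.succ := lt_of_le_of_ne (hmono (castSucc_le_succ k)) hii'
      have := hstep k
      rw [lt_def] at hlt
      refine Fin.ext ?_
      rw [val_add_one_of_lt (lt_of_lt_of_le hlt (le_last _))]
      omega
    · rw [hlast, last_add_one, h0, last_add_one]

end Fin

lemma isContractionModel_top_fibers {ι κ : Type*} {ψ : κ → ι} (hsurj : Function.Surjective ψ) :
    IsContractionModel (⊤ : SimpleGraph κ) (⊤ : SimpleGraph ι) fun i => ψ ⁻¹' {i} := by
  refine ⟨fun i => ?_, fun j => ⟨ψ j, rfl, fun _ h => h.symm⟩, fun i i' hii' => ?_⟩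
  · obtain ⟨j, hj⟩ := hsurj i
    have : Nonempty (ψ ⁻¹' {i}) := ⟨⟨j, hj⟩⟩
    rw [← completeGraph_eq_top, induce_top]
    exact connected_top
  · obtain ⟨j, hj⟩ := hsurj i
    obtain ⟨j', hj'⟩ := hsurj i'
    simp only [top_adj, Set.mem_preimage, Set.mem_singleton_iff]
    exact iff_of_true hii' ⟨j, hj, j', hj', fun h => hii' (hj ▸ hj' ▸ congrArg ψ h)⟩

lemma isContractionModel_cycleGraph_fibers {p q : ℕ} {ψ : Fin (q + 1) → Fin (p + 1)}
    (hmono : Monotone ψ) (hsurj : Function.Surjective ψ) :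
    IsContractionModel (cycleGraph (q + 1)) (cycleGraph (p + 1)) fun i => ψ ⁻¹' {i} := by
  refine ⟨fun i => ?_, fun j => ⟨ψ j, rfl, fun _ h => h.symm⟩, fun i i' hii' => ?_⟩
  · obtain ⟨j, hj⟩ := hsurj i
    exact (connected_iff _).mpr ⟨preconnected_induce_cycleGraph_of_ordConnected
      (Set.ordConnected_singleton.preimage_mono hmono), ⟨⟨j, hj⟩⟩⟩
  · simp only [cycleGraph_adj_iff_eq_add_one, Set.mem_preimage, Set.mem_singleton_iff,
      Fin.eq_add_one_iff_exists_of_monotone_of_surjective hmono hsurj hii',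
      Fin.eq_add_one_iff_exists_of_monotone_of_surjective hmono hsurj hii'.symm, ne_eq, hii',
      not_false_eq_true, true_and]
    constructor
    · rintro (⟨j, rfl, rfl⟩ | ⟨j, rfl, rfl⟩)
      · exact ⟨j, rfl, j + 1, rfl, fun h => hii' (congrArg ψ h), .inl rfl⟩
      · exact ⟨j + 1, rfl, j, rfl, fun h => hii' (congrArg ψ h), .inr rfl⟩
    · rintro ⟨j, rfl, j', rfl, -, rfl | rfl⟩
      exacts [.inl ⟨j, rfl, rfl⟩, .inr ⟨j', rfl, rfl⟩]

section RootJoin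

variable {ι : Type*} {R : SimpleGraph ι} {G : ι → RootedGraph}

def rootJoin (R : SimpleGraph ι) (G : ι → RootedGraph) : SimpleGraph (Σ i, (G i).V) :=
  SimpleGraph.fromRel fun x y => (∃ i a b, (G i).graph.Adj a b ∧ x = ⟨i, a⟩ ∧ y = ⟨i, b⟩) ∨
    (R.Adj x.1 y.1 ∧ x.2 = (G x.1).root ∧ y.2 = (G y.1).root)

lemma rootJoin_adj_mk_mk {i : ι} {a b : (G i).V} :
    (rootJoin R G).Adj ⟨i, a⟩ ⟨i, b⟩ ↔ (G i).graph.Adj a b := by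
  refine ⟨?_, fun h => ⟨fun he => h.ne (eq_of_heq (Sigma.mk.inj he).2),
    .inl (.inl ⟨i, a, b, h, rfl, rfl⟩)⟩⟩
  rintro ⟨-, (⟨k, a', b', h, hx, hy⟩ | ⟨hR, -⟩) | (⟨k, a', b', h, hx, hy⟩ | ⟨hR, -⟩)⟩
  · cases hx; cases hy; exact h
  · exact absurd hR R.irrefl
  · cases hx; cases hy; exact h.symm
  · exact absurd hR R.irrefl

lemma rootJoin_adj_mk_mk_of_ne {i j : ι} (hij : i ≠ j) {a : (G i).V} {b : (G j).V} :
    (rootJoin R G).Adj ⟨i, a⟩ ⟨j, b⟩ ↔ R.Adj i j ∧ a = (G i).root ∧ b = (G j).root := by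
  refine ⟨?_, fun h => ⟨fun he => hij (Sigma.mk.inj he).1, .inl (.inr h)⟩⟩
  rintro ⟨-, (⟨k, a', b', h, hx, hy⟩ | h) | (⟨k, a', b', h, hx, hy⟩ | ⟨hR, hb, ha⟩)⟩
  · cases hx; cases hy; exact absurd rfl hij
  · exact h
  · cases hx; cases hy; exact absurd rfl hij
  · exact ⟨hR.symm, ha, hb⟩

end RootJoin

lemma cycleC_graph {m : ℕ} (G : Fin (m + 1) → RootedGraph) :
    (cycleC G).graph = rootJoin (cycleGraph (m + 1)) G := by
  refine fromRel_or_congr fun ⟨i, a⟩ ⟨j, b⟩ hne => ?_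
  dsimp only
  refine Iff.trans ?_ (or_iff_left_of_imp fun ⟨h, hb, ha⟩ => ⟨h.symm, ha, hb⟩).symm
  rw [cycleGraph_adj_iff_eq_add_one]
  constructor
  · rintro (⟨k, hx, hy⟩ | ⟨k, hx, hy⟩) <;> cases hx <;> cases hy
    · refine ⟨⟨fun h => hne ?_, .inl rfl⟩, rfl, rfl⟩
      exact congrArg (fun k => (⟨k, (G k).root⟩ : Σ k, (G k).V)) h
    · refine ⟨⟨fun h => hne ?_, .inr rfl⟩, rfl, rfl⟩
      exact congrArg (fun k => (⟨k, (G k).root⟩ : Σ k, (G k).V)) h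
  · rintro ⟨⟨-, rfl | rfl⟩, rfl, rfl⟩
    exacts [.inl ⟨i, rfl, rfl⟩, .inr ⟨j, rfl, rfl⟩]

lemma cliqueC_graph {m : ℕ} (G : Fin (m + 1) → RootedGraph) :
    (cliqueC G).graph = rootJoin ⊤ G := by
  refine fromRel_or_congr fun ⟨i, a⟩ ⟨j, b⟩ hne => ?_
  have key : ∀ {i j : Fin (m + 1)} {a : (G i).V} {b : (G j).V},
      (∃ k l, k ≠ l ∧ (⟨i, a⟩ : Σ k, (G k).V) = ⟨k, (G k).root⟩ ∧
        (⟨j, b⟩ : Σ k, (G k).V) = ⟨l, (G l).root⟩) ↔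
      (⊤ : SimpleGraph (Fin (m + 1))).Adj i j ∧ a = (G i).root ∧ b = (G j).root := by
    refine ⟨fun ⟨k, l, hkl, hx, hy⟩ => ?_, fun ⟨hij, ha, hb⟩ => ⟨_, _, hij, ha ▸ rfl, hb ▸ rfl⟩⟩
    cases hx; cases hy
    exact ⟨hkl, rfl, rfl⟩
  exact or_congr key key

section RootJoinModel

variable {ι κ : Type*} {R' : SimpleGraph ι} {R : SimpleGraph κ} {H : ι → RootedGraph}
  {G : κ → RootedGraph} {β : ι → Set κ} {φ : ι → κ} {μ : ∀ i, (H i).V → Set (G (φ i)).V}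

def rootJoinBranchSet (β : ι → Set κ) (φ : ι → κ) (μ : ∀ i, (H i).V → Set (G (φ i)).V)
    (w : Σ i, (H i).V) : Set (Σ j, (G j).V) :=
  Sigma.mk (φ w.1) '' μ w.1 w.2 ∪ {v | w.2 = (H w.1).root ∧ v.1 ∈ β w.1 ∧ v.1 ≠ φ w.1}

lemma mk_mem_rootJoinBranchSet_self {i : ι} {a : (H i).V} {x : (G (φ i)).V} :
    ⟨φ i, x⟩ ∈ rootJoinBranchSet β φ μ ⟨i, a⟩ ↔ x ∈ μ i a := by
  simp [rootJoinBranchSet]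

lemma mk_mem_rootJoinBranchSet_of_ne {i : ι} {a : (H i).V} {j : κ} (hj : j ≠ φ i)
    {y : (G j).V} :
    ⟨j, y⟩ ∈ rootJoinBranchSet β φ μ ⟨i, a⟩ ↔ a = (H i).root ∧ j ∈ β i := by
  simp [rootJoinBranchSet, hj, Ne.symm hj]

lemma fst_mem_of_mem_rootJoinBranchSet (hφ : ∀ i, φ i ∈ β i) {w : Σ i, (H i).V}
    {v : Σ j, (G j).V} (hv : v ∈ rootJoinBranchSet β φ μ w) : v.1 ∈ β w.1 := by
  rcases hv with ⟨x, -, rfl⟩ | ⟨-, hv, -⟩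
  exacts [hφ w.1, hv]

lemma root_mem_rootJoinBranchSet (hroot : ∀ i, (G (φ i)).root ∈ μ i (H i).root) {i : ι}
    {j : κ} (hj : j ∈ β i) : ⟨j, (G j).root⟩ ∈ rootJoinBranchSet β φ μ ⟨i, (H i).root⟩ := by
  rcases eq_or_ne j (φ i) with rfl | hji
  · exact mk_mem_rootJoinBranchSet_self.mpr (hroot i)
  · exact (mk_mem_rootJoinBranchSet_of_ne hji).mpr ⟨rfl, hj⟩

lemma eq_root_of_root_mem_rootJoinBranchSet
    (hμ : ∀ i, IsContractionModel (G (φ i)).graph (H i).graph (μ i))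
    (hroot : ∀ i, (G (φ i)).root ∈ μ i (H i).root) {i : ι} {a : (H i).V} {j : κ}
    (h : ⟨j, (G j).root⟩ ∈ rootJoinBranchSet β φ μ ⟨i, a⟩) : a = (H i).root := by
  rcases eq_or_ne j (φ i) with rfl | hji
  · exact (hμ i).eq_of_mem (mk_mem_rootJoinBranchSet_self.mp h) (hroot i)
  · exact ((mk_mem_rootJoinBranchSet_of_ne hji).mp h).1

lemma existsUnique_mem_rootJoinBranchSet (hβ : IsContractionModel R R' β)
    (hφ : ∀ i, φ i ∈ β i) (hμ : ∀ i, IsContractionModel (G (φ i)).graph (H i).graph (μ i))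
    (v : Σ j, (G j).V) : ∃! w, v ∈ rootJoinBranchSet β φ μ w := by
  obtain ⟨j, y⟩ := v
  obtain ⟨i, hji, hi⟩ := hβ.2.1 j
  have hfst : ∀ w, ⟨j, y⟩ ∈ rootJoinBranchSet β φ μ w → w.1 = i := fun w hw =>
    hi w.1 (fst_mem_of_mem_rootJoinBranchSet hφ hw)
  rcases eq_or_ne j (φ i) with rfl | hj
  · obtain ⟨a, ha, huniq⟩ := (hμ i).2.1 y
    refine ⟨⟨i, a⟩, mk_mem_rootJoinBranchSet_self.mpr ha, fun ⟨i', a'⟩ h' => ?_⟩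
    obtain rfl : i' = i := hfst _ h'
    rw [huniq a' (mk_mem_rootJoinBranchSet_self.mp h')]
  · refine ⟨⟨i, (H i).root⟩, (mk_mem_rootJoinBranchSet_of_ne hj).mpr ⟨rfl, hji⟩,
      fun ⟨i', a'⟩ h' => ?_⟩
    obtain rfl : i' = i := hfst _ h'
    rw [((mk_mem_rootJoinBranchSet_of_ne hj).mp h').1]

lemma connected_induce_rootJoinBranchSet (hβ : IsContractionModel R R' β) (hφ : ∀ i, φ i ∈ β i)
    (hμ : ∀ i, IsContractionModel (G (φ i)).graph (H i).graph (μ i))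
    (hroot : ∀ i, (G (φ i)).root ∈ μ i (H i).root) (hG : ∀ j, (G j).graph.Connected)
    (w : Σ i, (H i).V) : ((rootJoin R G).induce (rootJoinBranchSet β φ μ w)).Connected := by
  have hlayer : ∀ j : κ, ∀ ⦃x y : (G j).V⦄, (G j).graph.Adj x y →
      (⟨j, x⟩ : Σ j, (G j).V) = ⟨j, y⟩ ∨ (rootJoin R G).Adj ⟨j, x⟩ ⟨j, y⟩ :=
    fun j x y h => .inr (rootJoin_adj_mk_mk.mpr h)
  obtain ⟨i, a⟩ := w
  have himage : ((rootJoin R G).induce (Sigma.mk (φ i) '' μ i a)).Connected :=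
    ((hμ i).1 a).induce_image (hlayer (φ i))
  by_cases ha : a = (H i).root
  swap
  · have hB : rootJoinBranchSet β φ μ ⟨i, a⟩ = Sigma.mk (φ i) '' μ i a := by
      simp [rootJoinBranchSet, ha]
    rwa [hB]
  subst ha
  set B := rootJoinBranchSet β φ μ ⟨i, (H i).root⟩
  let rootSet : Set (Σ j, (G j).V) := (fun j => ⟨j, (G j).root⟩) '' β i
  have hrootSet : ((rootJoin R G).induce rootSet).Connected :=
    (hβ.1 i).induce_image fun j k h =>
      .inr ((rootJoin_adj_mk_mk_of_ne h.ne).mpr ⟨h, rfl, rfl⟩)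
  have hrootSet_sub : rootSet ⊆ B := by
    rintro _ ⟨j, hj, rfl⟩
    exact root_mem_rootJoinBranchSet hroot hj
  refine induce_connected_of_patches ⟨φ i, (G (φ i)).root⟩ (hrootSet_sub ⟨φ i, hφ i, rfl⟩) ?_
  rintro ⟨j, y⟩ hy
  rcases eq_or_ne j (φ i) with rfl | hj
  · refine ⟨_, Set.subset_union_left, ⟨_, hroot i, rfl⟩, ⟨y, ?_, rfl⟩, himage.preconnected _ _⟩
    exact mk_mem_rootJoinBranchSet_self.mp hy
  · have hjβ := ((mk_mem_rootJoinBranchSet_of_ne hj).mp hy).2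
    have hlayer_conn : ((rootJoin R G).induce (Set.range (Sigma.mk j))).Connected :=
      (hG j).induce_range (hlayer j)
    refine ⟨rootSet ∪ Set.range (Sigma.mk j), Set.union_subset hrootSet_sub ?_,
      .inl ⟨φ i, hφ i, rfl⟩, .inr ⟨y, rfl⟩,
      (induce_union_connected hrootSet.preconnected hlayer_conn.preconnected
        ⟨_, ⟨j, hjβ, rfl⟩, ⟨_, rfl⟩⟩).preconnected _ _⟩
    rintro _ ⟨z, rfl⟩
    exact (mk_mem_rootJoinBranchSet_of_ne hj).mpr ⟨rfl, hjβ⟩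

lemma rootJoin_adj_iff_exists_rootJoinBranchSet (hβ : IsContractionModel R R' β)
    (hφ : ∀ i, φ i ∈ β i) (hμ : ∀ i, IsContractionModel (G (φ i)).graph (H i).graph (μ i))
    (hroot : ∀ i, (G (φ i)).root ∈ μ i (H i).root) {w w' : Σ i, (H i).V} (hww' : w ≠ w') :
    (rootJoin R' H).Adj w w' ↔ ∃ x ∈ rootJoinBranchSet β φ μ w,
      ∃ y ∈ rootJoinBranchSet β φ μ w', (rootJoin R G).Adj x y := by
  obtain ⟨i, a⟩ := w
  obtain ⟨i', a'⟩ := w'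
  rcases eq_or_ne i i' with rfl | hii'
  · have haa' : a ≠ a' := fun h => hww' (h ▸ rfl)
    rw [rootJoin_adj_mk_mk, (hμ i).2.2 a a' haa']
    constructor
    · rintro ⟨x, hx, y, hy, hxy⟩
      exact ⟨_, mk_mem_rootJoinBranchSet_self.mpr hx, _, mk_mem_rootJoinBranchSet_self.mpr hy,
        rootJoin_adj_mk_mk.mpr hxy⟩
    · rintro ⟨⟨j, x⟩, hx, ⟨j', y⟩, hy, hxy⟩
      rcases eq_or_ne j j' with rfl | hjj'
      · rcases eq_or_ne j (φ i) with rfl | hj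
        · exact ⟨x, mk_mem_rootJoinBranchSet_self.mp hx, y, mk_mem_rootJoinBranchSet_self.mp hy,
            rootJoin_adj_mk_mk.mp hxy⟩
        · exact absurd (((mk_mem_rootJoinBranchSet_of_ne hj).mp hx).1.trans
            ((mk_mem_rootJoinBranchSet_of_ne hj).mp hy).1.symm) haa'
      · obtain ⟨-, rfl, rfl⟩ := (rootJoin_adj_mk_mk_of_ne hjj').mp hxy
        exact absurd ((eq_root_of_root_mem_rootJoinBranchSet hμ hroot hx).trans
          (eq_root_of_root_mem_rootJoinBranchSet hμ hroot hy).symm) haa'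
  · rw [rootJoin_adj_mk_mk_of_ne hii', hβ.2.2 i i' hii']
    constructor
    · rintro ⟨⟨j, hj, j', hj', hjj'⟩, rfl, rfl⟩
      exact ⟨_, root_mem_rootJoinBranchSet hroot hj, _, root_mem_rootJoinBranchSet hroot hj',
        (rootJoin_adj_mk_mk_of_ne hjj'.ne).mpr ⟨hjj', rfl, rfl⟩⟩
    · rintro ⟨⟨j, x⟩, hx, ⟨j', y⟩, hy, hxy⟩
      have hj := fst_mem_of_mem_rootJoinBranchSet hφ hx
      have hj' := fst_mem_of_mem_rootJoinBranchSet hφ hy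
      have hjj' : j ≠ j' := by
        rintro rfl
        exact hii' (hβ.eq_of_mem hj hj')
      obtain ⟨hR, rfl, rfl⟩ := (rootJoin_adj_mk_mk_of_ne hjj').mp hxy
      exact ⟨⟨j, hj, j', hj', hR⟩, eq_root_of_root_mem_rootJoinBranchSet hμ hroot hx,
        eq_root_of_root_mem_rootJoinBranchSet hμ hroot hy⟩

lemma isContractionModel_rootJoinBranchSet (hβ : IsContractionModel R R' β)
    (hφ : ∀ i, φ i ∈ β i) (hμ : ∀ i, IsContractionModel (G (φ i)).graph (H i).graph (μ i))
    (hroot : ∀ i, (G (φ i)).root ∈ μ i (H i).root) (hG : ∀ j, (G j).graph.Connected) :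
    IsContractionModel (rootJoin R G) (rootJoin R' H) (rootJoinBranchSet β φ μ) :=
  ⟨connected_induce_rootJoinBranchSet hβ hφ hμ hroot hG,
    existsUnique_mem_rootJoinBranchSet hβ hφ hμ,
    fun _ _ => rootJoin_adj_iff_exists_rootJoinBranchSet hβ hφ hμ hroot⟩

end RootJoinModel

section Stick

variable {m : ℕ} {G : Fin (m + 1) → RootedGraph}

open Classical in
noncomputable def stickProj (G : Fin (m + 1) → RootedGraph) (x : Σ j, (G j).V) : (stickC G).V :=
  if h : x.2 = (G x.1).root then none else some ⟨x.1, ⟨x.2, h⟩⟩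

lemma stickProj_mk_root (j : Fin (m + 1)) : stickProj G ⟨j, (G j).root⟩ = none :=
  dif_pos rfl

lemma stickProj_mk_of_ne {j : Fin (m + 1)} {y : (G j).V} (hy : y ≠ (G j).root) :
    stickProj G ⟨j, y⟩ = some ⟨j, ⟨y, hy⟩⟩ :=
  dif_neg hy

lemma stickProj_eq_none_iff {x : Σ j, (G j).V} :
    stickProj G x = none ↔ x.2 = (G x.1).root := by
  obtain ⟨j, y⟩ := x
  by_cases hy : y = (G j).root
  · subst hy
    exact iff_of_true (stickProj_mk_root j) rfl
  · simp [stickProj_mk_of_ne hy, hy]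

lemma stickProj_eq_some_iff {x : Σ j, (G j).V} {j : Fin (m + 1)}
    {b : {v : (G j).V // v ≠ (G j).root}} :
    stickProj G x = some ⟨j, b⟩ ↔ x = ⟨j, b.1⟩ := by
  obtain ⟨i, y⟩ := x
  by_cases hy : y = (G i).root
  · subst hy
    rw [stickProj_mk_root]
    refine iff_of_false (Option.some_ne_none _).symm fun h => ?_
    obtain ⟨rfl, h⟩ := Sigma.mk.inj_iff.mp h
    exact b.2 (eq_of_heq h).symm
  · rw [stickProj_mk_of_ne hy]
    constructor
    · intro h
      cases h
      rfl
    · rintro ⟨⟩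
      rfl

lemma stickC_adj_iff {w w' : (stickC G).V} :
    (stickC G).graph.Adj w w' ↔ w ≠ w' ∧
      ∃ j a b, (G j).graph.Adj a b ∧ stickProj G ⟨j, a⟩ = w ∧ stickProj G ⟨j, b⟩ = w' := by
  refine (SimpleGraph.fromRel_adj _ _ _).trans (and_congr_right fun _ => ?_)
  constructor
  · rintro ((⟨i, a, b, h, rfl, rfl⟩ | ⟨i, b, h, rfl, rfl⟩) |
      (⟨i, a, b, h, rfl, rfl⟩ | ⟨i, b, h, rfl, rfl⟩))
    · exact ⟨i, a, b, h, stickProj_mk_of_ne a.2, stickProj_mk_of_ne b.2⟩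
    · exact ⟨i, _, b, h, stickProj_mk_root i, stickProj_mk_of_ne b.2⟩
    · exact ⟨i, b, a, h.symm, stickProj_mk_of_ne b.2, stickProj_mk_of_ne a.2⟩
    · exact ⟨i, b, _, h.symm, stickProj_mk_of_ne b.2, stickProj_mk_root i⟩
  · rintro ⟨j, a, b, h, rfl, rfl⟩
    by_cases ha : a = (G j).root
    · subst ha
      rw [stickProj_mk_root, stickProj_mk_of_ne h.ne.symm]
      exact .inl (.inr ⟨j, _, h, rfl, rfl⟩)
    by_cases hb : b = (G j).root
    · subst hb
      rw [stickProj_mk_root, stickProj_mk_of_ne ha]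
      exact .inr (.inr ⟨j, _, h.symm, rfl, rfl⟩)
    · rw [stickProj_mk_of_ne ha, stickProj_mk_of_ne hb]
      exact .inl (.inl ⟨j, ⟨a, ha⟩, ⟨b, hb⟩, h, rfl, rfl⟩)

lemma isContractionModel_stickProj_fibers (G : Fin (m + 1) → RootedGraph) :
    IsContractionModel (rootJoin ⊤ G) (stickC G).graph fun w => stickProj G ⁻¹' {w} := by
  refine ⟨fun w => ?_, fun x => ⟨_, rfl, fun _ h => h.symm⟩, fun w w' hww' => ?_⟩
  · rcases w with _ | ⟨j, b⟩
    · have hfiber : stickProj G ⁻¹' {none} = Set.range fun j => ⟨j, (G j).root⟩ := by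
        ext ⟨j, y⟩
        refine stickProj_eq_none_iff.trans ⟨?_, ?_⟩
        · rintro (rfl : y = (G j).root)
          exact ⟨j, rfl⟩
        · rintro ⟨k, hk⟩
          cases hk
          rfl
      refine (congrArg (fun s => ((rootJoin ⊤ G).induce s).Connected) hfiber).mpr ?_
      exact connected_top.induce_range fun i j hij =>
        .inr ((rootJoin_adj_mk_mk_of_ne hij).mpr ⟨hij, rfl, rfl⟩)
    · have hfiber : stickProj G ⁻¹' {some ⟨j, b⟩} = {⟨j, b.1⟩} := by
        ext x
        exact stickProj_eq_some_iff
      refine (congrArg (fun s => ((rootJoin ⊤ G).induce s).Connected) hfiber).mpr ?_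
      rw [induce_singleton_eq_top]
      exact connected_top
  · rw [stickC_adj_iff, and_iff_right hww']
    constructor
    · rintro ⟨j, a, b, h, rfl, rfl⟩
      exact ⟨⟨j, a⟩, rfl, ⟨j, b⟩, rfl, rootJoin_adj_mk_mk.mpr h⟩
    · rintro ⟨⟨j, a⟩, rfl, ⟨j', b⟩, rfl, h⟩
      rcases eq_or_ne j j' with rfl | hjj'
      · exact ⟨j, a, b, rootJoin_adj_mk_mk.mp h, rfl, rfl⟩
      · obtain ⟨-, rfl, rfl⟩ := (rootJoin_adj_mk_mk_of_ne hjj').mp h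
        rw [stickProj_mk_root, stickProj_mk_root] at hww'
        exact absurd rfl hww'

end Stick

section Compositions

variable {p q : ℕ} {H : Fin (p + 1) → RootedGraph} {G : Fin (q + 1) → RootedGraph}
  {φ : Fin (p + 1) → Fin (q + 1)}

lemma RootedContraction.cycleC (hG : ∀ j, (G j).graph.Connected) (hφ : StrictMono φ)
    (hctr : ∀ i, RootedContraction (H i) (G (φ i))) :
    RootedContraction (cycleC H) (cycleC G) := by
  choose μ hμ hroot using hctr
  obtain ⟨ψ, hmono, hψφ⟩ := hφ.exists_monotone_leftInverse
  have hβ := isContractionModel_cycleGraph_fibers hmono hψφ.surjective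
  refine ⟨rootJoinBranchSet (fun i => ψ ⁻¹' {i}) φ μ, ?_,
    root_mem_rootJoinBranchSet hroot (hmono.map_bot_of_surjective hψφ.surjective)⟩
  rw [cycleC_graph, cycleC_graph]
  exact isContractionModel_rootJoinBranchSet hβ hψφ hμ hroot hG

lemma RootedContraction.cliqueC (hG : ∀ j, (G j).graph.Connected) (hφ : StrictMono φ)
    (hctr : ∀ i, RootedContraction (H i) (G (φ i))) :
    RootedContraction (cliqueC H) (cliqueC G) := by
  choose μ hμ hroot using hctr
  obtain ⟨ψ, hmono, hψφ⟩ := hφ.exists_monotone_leftInverse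
  have hβ := isContractionModel_top_fibers hψφ.surjective
  refine ⟨rootJoinBranchSet (fun i => ψ ⁻¹' {i}) φ μ, ?_,
    root_mem_rootJoinBranchSet hroot (hmono.map_bot_of_surjective hψφ.surjective)⟩
  rw [cliqueC_graph, cliqueC_graph]
  exact isContractionModel_rootJoinBranchSet hβ hψφ hμ hroot hG

lemma RootedContraction.stickC (hG : ∀ j, (G j).graph.Connected) (hφ : StrictMono φ)
    (hctr : ∀ i, RootedContraction (H i) (G (φ i))) :
    RootedContraction (stickC H) (stickC G) := by
  choose μ hμ hroot using hctr
  obtain ⟨ψ, hmono, hψφ⟩ := hφ.exists_monotone_leftInverse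
  set B := rootJoinBranchSet (fun i => ψ ⁻¹' {i}) φ μ
  have hB : IsContractionModel (rootJoin ⊤ G) (rootJoin ⊤ H) B :=
    isContractionModel_rootJoinBranchSet (isContractionModel_top_fibers hψφ.surjective) hψφ hμ
      hroot hG
  set ν := fun w => ⋃ u ∈ stickProj H ⁻¹' {w}, B u
  have hroots : ∀ j, ⟨j, (G j).root⟩ ∈ ν none := fun j =>
    Set.mem_biUnion (x := ⟨ψ j, (H (ψ j)).root⟩) (stickProj_mk_root _)
      (root_mem_rootJoinBranchSet hroot rfl)
  have hsat : ∀ w x y, stickProj G x = stickProj G y → x ∈ ν w → y ∈ ν w := by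
    rintro w ⟨j, x⟩ ⟨j', y⟩ hxy hx
    by_cases hy : y = (G j').root
    · subst hy
      obtain ⟨⟨i, a⟩, hu, hxu⟩ := Set.mem_iUnion₂.mp hx
      rw [stickProj_mk_root, stickProj_eq_none_iff] at hxy
      dsimp only at hxy
      subst hxy
      obtain rfl := eq_root_of_root_mem_rootJoinBranchSet hμ hroot hxu
      obtain rfl : none = w := (stickProj_mk_root i).symm.trans hu
      exact hroots j'
    · rw [stickProj_mk_of_ne hy, stickProj_eq_some_iff] at hxy
      exact hxy ▸ hx
  exact ⟨fun w => stickProj G '' ν w,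
    (hB.comp (isContractionModel_stickProj_fibers H)).image (isContractionModel_stickProj_fibers G)
      hsat, ⟨0, (G 0).root⟩, hroots 0, stickProj_mk_root 0⟩

end Compositions

theorem rooted_compositions_contraction_general (p q : ℕ)
    (H : Fin (p + 1) → RootedGraph) (G : Fin (q + 1) → RootedGraph)
    (hG : ∀ j, (G j).graph.Connected)
    (φ : Fin (p + 1) → Fin (q + 1)) (hφ : StrictMono φ)
    (hctr : ∀ i, RootedContraction (H i) (G (φ i))) :
    RootedContraction (cycleC H) (cycleC G) ∧
    RootedContraction (cliqueC H) (cliqueC G) ∧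
    RootedContraction (stickC H) (stickC G) :=
  ⟨.cycleC hG hφ hctr, .cliqueC hG hφ hctr, .stickC hG hφ hctr⟩

/-- Let `⟨H_0, …, H_p⟩` and `⟨G_0, …, G_q⟩` be nonempty sequences of
rooted connected graphs, and suppose there is a strictly increasing map `φ` between the
index sets such that each `H_i` is a rooted contraction of `G_{φ i}`. Then the cycle,
clique and stick compositions of the `H_i`'s are rooted contractions of the respective
compositions of the `G_j`'s. -/
theorem rooted_compositions_contraction (p q : ℕ)
    (H : Fin (p + 1) → RootedGraph) (G : Fin (q + 1) → RootedGraph)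
    (hH : ∀ i, (H i).graph.Connected) (hG : ∀ j, (G j).graph.Connected)
    (φ : Fin (p + 1) → Fin (q + 1)) (hφ : StrictMono φ)
    (hctr : ∀ i, RootedContraction (H i) (G (φ i))) :
    RootedContraction (cycleC H) (cycleC G) ∧
    RootedContraction (cliqueC H) (cliqueC G) ∧
    RootedContraction (stickC H) (stickC G) :=
  rooted_compositions_contraction_general p q H G hG φ hφ hctr
end
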